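/- Let f : ℝ^d → ℝ be α²-strongly convex and g : ℝ^d → ℝ be convex and L-Lipschitz. Let z₁ be the minimizer of f and z₂ be the minimizer of f + g. Then ‖z₁ − z₂‖₂ ≤ L/α². -/
import Mathlib


noncomputable def euclNorm {d : ℕ} (v : Fin d → ℝ) : ℝ := Real.sqrt (∑ i, v i ^ 2)

def StrongConvexW {d : ℕ} (m : ℝ) (f : (Fin d → ℝ) → ℝ) : Prop :=
  ∀ x y : Fin d → ℝ, ∀ t : ℝ, 0 ≤ t → t ≤ 1 →
    f (t • x + (1 - t) • y) ≤ t * f x + (1 - t) * f y - m / 2 * (t * (1 - t)) * euclNorm (x - y) ^ 2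

def LipschitzW {d : ℕ} (L : ℝ) (g : (Fin d → ℝ) → ℝ) : Prop :=
  ∀ x y : Fin d → ℝ, |g x - g y| ≤ L * euclNorm (x - y)

lemma euclNorm_symm {d : ℕ} (x y : Fin d → ℝ) : euclNorm (x - y) = euclNorm (y - x) := by
  unfold euclNorm
  congr 1
  apply Finset.sum_congr rfl
  intro i _
  have : (x - y) i = -((y - x) i) := by simp
  rw [this, neg_pow]
  ring

/-- perturbation of strongly convex functions II. -/
theorem stmt_1 {d : ℕ} (α L : ℝ) (hα : 0 < α) (hL : 0 ≤ L)
    (f g : (Fin d → ℝ) → ℝ)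
    (hfsc : StrongConvexW (α ^ 2) f)
    (hgconv : ConvexOn ℝ Set.univ g) (hgL : LipschitzW L g)
    (z₁ z₂ : Fin d → ℝ)
    (hz₁ : ∀ w : Fin d → ℝ, f z₁ ≤ f w)
    (hz₂ : ∀ w : Fin d → ℝ, f z₂ + g z₂ ≤ f w + g w) :
    euclNorm (z₁ - z₂) ≤ L / α ^ 2 := by
  set D := euclNorm (z₁ - z₂) with hD
  have hD0 : 0 ≤ D := Real.sqrt_nonneg _
  set c : ℝ := α ^ 2 / 2 * D ^ 2 with hc
  have hc0 : 0 ≤ c := by positivity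
  -- Step 1 : f z₁ + c ≤ f z₂
  have key1 : ∀ t : ℝ, 0 < t → t ≤ 1 → f z₁ + c ≤ f z₂ + t * c := by
    intro t ht ht1
    have H := hfsc z₂ z₁ t (le_of_lt ht) ht1
    rw [← euclNorm_symm] at H
    have H2 := hz₁ (t • z₂ + (1 - t) • z₁)
    rw [hc]
    nlinarith [H, H2, ht]
  have h1 : f z₁ + c ≤ f z₂ := by
    apply le_of_forall_pos_le_add
    intro ε hε
    have htpos : 0 < min 1 (ε / (c + 1)) := by positivity
    have htle : min 1 (ε / (c + 1)) ≤ 1 := min_le_left _ _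
    have := key1 _ htpos htle
    have h2 : min 1 (ε / (c + 1)) * c ≤ ε := by
      calc min 1 (ε / (c + 1)) * c ≤ (ε / (c + 1)) * c := by
            apply mul_le_mul_of_nonneg_right (min_le_right _ _) hc0
        _ ≤ ε := by
            rw [div_mul_eq_mul_div, div_le_iff₀ (by linarith)]
            nlinarith
    linarith
  -- Step 2 : f z₂ + g z₂ + c ≤ f z₁ + g z₁
  have key2 : ∀ t : ℝ, 0 < t → t ≤ 1 →
      f z₂ + g z₂ + c ≤ f z₁ + g z₁ + t * c := by
    intro t ht ht1
    have H := hfsc z₁ z₂ t (le_of_lt ht) ht1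
    have Hg : g (t • z₁ + (1 - t) • z₂) ≤ t * g z₁ + (1 - t) * g z₂ :=
      hgconv.2 (Set.mem_univ z₁) (Set.mem_univ z₂) (le_of_lt ht) (by linarith) (by ring)
    have H2 := hz₂ (t • z₁ + (1 - t) • z₂)
    rw [hc]
    nlinarith [H, Hg, H2, ht]
  have h2 : f z₂ + g z₂ + c ≤ f z₁ + g z₁ := by
    apply le_of_forall_pos_le_add
    intro ε hε
    have htpos : 0 < min 1 (ε / (c + 1)) := by positivity
    have htle : min 1 (ε / (c + 1)) ≤ 1 := min_le_left _ _
    have := key2 _ htpos htle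
    have h2' : min 1 (ε / (c + 1)) * c ≤ ε := by
      calc min 1 (ε / (c + 1)) * c ≤ (ε / (c + 1)) * c := by
            apply mul_le_mul_of_nonneg_right (min_le_right _ _) hc0
        _ ≤ ε := by
            rw [div_mul_eq_mul_div, div_le_iff₀ (by linarith)]
            nlinarith
    linarith
  -- Step 3 : 2c ≤ g z₁ - g z₂ ≤ L * D
  have hLip := hgL z₁ z₂
  have h3 : g z₁ - g z₂ ≤ L * D := (le_abs_self _).trans hLip
  have h4 : 2 * c ≤ L * D := by linarith
  -- Step 4
  have hα2 : 0 < α ^ 2 := by positivity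
  rcases eq_or_lt_of_le hD0 with hD0' | hDpos
  · rw [← hD0']
    positivity
  · rw [le_div_iff₀ hα2]
    have : α ^ 2 * D ^ 2 ≤ L * D := by rw [hc] at h4; linarith
    nlinarith
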